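/- Let n ≥ 5 and let L = F1(α_4,…,α_n,θ) be an n-dimensional complex filiform Leibniz algebra of the first family. For any pre-derivation P of L, writing P(e_3) = Σ_{t=1}^n c_t e_t in the basis e_1,…,e_n, one has c_1 = 0 and c_2 α_t = 0 for all 4 ≤ t ≤ n−1. -/
import Mathlib

open Finset

/-- The basis vector `e_i` (1-indexed) of `ℂ^n`; zero if `i` is out of range. -/
noncomputable def E (n : ℕ) (i : ℕ) : Fin n → ℂ :=
  if h : 1 ≤ i ∧ i ≤ n then Pi.single (⟨i - 1, by omega⟩ : Fin n) 1 else 0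

/-- The bilinear bracket on `ℂ^n` determined by the products `m i j` of the
(1-indexed) basis vectors `e_i`, `e_j`. -/
noncomputable def bracketOf (n : ℕ) (m : ℕ → ℕ → Fin n → ℂ)
    (x y : Fin n → ℂ) : Fin n → ℂ :=
  ∑ i : Fin n, ∑ j : Fin n, (x i * y j) • m (i.1 + 1) (j.1 + 1)

/-- `P` is a pre-derivation of the algebra with bracket `br`. -/
def IsPreDeriv (n : ℕ) (br : (Fin n → ℂ) → (Fin n → ℂ) → Fin n → ℂ)
    (P : Module.End ℂ (Fin n → ℂ)) : Prop :=
  ∀ x y z, P (br (br x y) z) =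
    br (br (P x) y) z + br (br x (P y)) z + br (br x y) (P z)

/-- Multiplication table of the first family `F1(α₄,…,αₙ,θ)` of filiform Leibniz
algebras: `[e₁,e₁]=e₃`; `[eᵢ,e₁]=e_{i+1}` for `2 ≤ i ≤ n-1`;
`[e₁,e₂]=∑_{t=4}^{n-1} α_t e_t + θ eₙ`; `[eⱼ,e₂]=∑_{t=j+2}^{n} α_{t-j+2} e_t`
for `2 ≤ j ≤ n-2`; all other products zero. -/
noncomputable def F1mul (n : ℕ) (α : ℕ → ℂ) (θ : ℂ) (i j : ℕ) : Fin n → ℂ :=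
  if i = 1 ∧ j = 1 then E n 3
  else if 2 ≤ i ∧ i ≤ n - 1 ∧ j = 1 then E n (i + 1)
  else if i = 1 ∧ j = 2 then (∑ t ∈ Icc 4 (n - 1), α t • E n t) + θ • E n n
  else if 2 ≤ i ∧ i ≤ n - 2 ∧ j = 2 then ∑ t ∈ Icc (i + 2) n, α (t - i + 2) • E n t
  else 0

lemma E_apply (n a : ℕ) (j : Fin n) : E n a j = if j.1 + 1 = a then 1 else 0 := by
  unfold E
  split
  case isTrue h =>
    have : ((j : Fin n) = ⟨a - 1, by omega⟩) ↔ (j.1 + 1 = a) := by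
      rw [Fin.ext_iff]
      show j.1 = a - 1 ↔ _
      omega
    simp [Pi.single_apply, this]
  case isFalse h =>
    have hj := j.isLt
    simp only [Pi.zero_apply]
    rw [if_neg (by omega)]

lemma bracketOf_apply (n : ℕ) (m : ℕ → ℕ → Fin n → ℂ) (x y : Fin n → ℂ) (k : Fin n) :
    bracketOf n m x y k = ∑ i : Fin n, ∑ j : Fin n, (x i * y j) * m (i.1 + 1) (j.1 + 1) k := by
  simp [bracketOf, Finset.sum_apply]

lemma br_single (n : ℕ) (m : ℕ → ℕ → Fin n → ℂ) (a b : ℕ)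
    (ha : 1 ≤ a) (ha' : a ≤ n) (hb : 1 ≤ b) (hb' : b ≤ n) :
    bracketOf n m (E n a) (E n b) = m a b := by
  funext k
  rw [bracketOf_apply]
  rw [Fintype.sum_eq_single (⟨a - 1, by omega⟩ : Fin n)]
  · rw [Fintype.sum_eq_single (⟨b - 1, by omega⟩ : Fin n)]
    · rw [E_apply, E_apply, if_pos (by simp; omega), if_pos (by simp; omega)]
      have h1 : a - 1 + 1 = a := by omega
      have h2 : b - 1 + 1 = b := by omega
      simp only [h1, h2]
      ring
    · intro j hj
      rw [E_apply (n := n) b j, if_neg (by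
        intro hcon
        exact hj (Fin.ext (by simp; omega)))]
      ring
  · intro i hi
    refine Finset.sum_eq_zero fun j _ => ?_
    rw [E_apply (n := n) a i, if_neg (by
      intro hcon
      exact hi (Fin.ext (by simp; omega)))]
    ring

lemma br_zero_left (n : ℕ) (m : ℕ → ℕ → Fin n → ℂ) (y : Fin n → ℂ) :
    bracketOf n m 0 y = 0 := by
  funext k
  rw [bracketOf_apply]
  simp

lemma br_zero_right (n : ℕ) (m : ℕ → ℕ → Fin n → ℂ) (x : Fin n → ℂ) :
    bracketOf n m x 0 = 0 := by
  funext k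
  rw [bracketOf_apply]
  simp

lemma br_smul_right (n : ℕ) (m : ℕ → ℕ → Fin n → ℂ) (x : Fin n → ℂ) (a : ℂ) (y : Fin n → ℂ) :
    bracketOf n m x (a • y) = a • bracketOf n m x y := by
  funext k
  simp only [Pi.smul_apply, smul_eq_mul, bracketOf_apply, Finset.mul_sum]
  exact Finset.sum_congr rfl fun i _ => Finset.sum_congr rfl fun j _ => by ring

lemma br_add_right (n : ℕ) (m : ℕ → ℕ → Fin n → ℂ) (x y z : Fin n → ℂ) :
    bracketOf n m x (y + z) = bracketOf n m x y + bracketOf n m x z := by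
  funext k
  simp only [Pi.add_apply, bracketOf_apply, ← Finset.sum_add_distrib]
  exact Finset.sum_congr rfl fun i _ => Finset.sum_congr rfl fun j _ => by ring

lemma br_smul_left (n : ℕ) (m : ℕ → ℕ → Fin n → ℂ) (a : ℂ) (x y : Fin n → ℂ) :
    bracketOf n m (a • x) y = a • bracketOf n m x y := by
  funext k
  simp only [Pi.smul_apply, smul_eq_mul, bracketOf_apply, Finset.mul_sum]
  exact Finset.sum_congr rfl fun i _ => Finset.sum_congr rfl fun j _ => by ring

lemma br_add_left (n : ℕ) (m : ℕ → ℕ → Fin n → ℂ) (x y z : Fin n → ℂ) :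
    bracketOf n m (x + y) z = bracketOf n m x z + bracketOf n m y z := by
  funext k
  simp only [Pi.add_apply, bracketOf_apply, ← Finset.sum_add_distrib]
  exact Finset.sum_congr rfl fun i _ => Finset.sum_congr rfl fun j _ => by ring

lemma br_sum_right {ι : Type*} (n : ℕ) (m : ℕ → ℕ → Fin n → ℂ) (x : Fin n → ℂ)
    (s : Finset ι) (f : ι → Fin n → ℂ) :
    bracketOf n m x (∑ t ∈ s, f t) = ∑ t ∈ s, bracketOf n m x (f t) := by
  induction s using Finset.cons_induction with
  | empty => simp [br_zero_right]
  | cons a s ha ih => rw [Finset.sum_cons, Finset.sum_cons, br_add_right, ih]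

lemma br_sum_left {ι : Type*} (n : ℕ) (m : ℕ → ℕ → Fin n → ℂ) (y : Fin n → ℂ)
    (s : Finset ι) (f : ι → Fin n → ℂ) :
    bracketOf n m (∑ t ∈ s, f t) y = ∑ t ∈ s, bracketOf n m (f t) y := by
  induction s using Finset.cons_induction with
  | empty => simp [br_zero_left]
  | cons a s ha ih => rw [Finset.sum_cons, Finset.sum_cons, br_add_left, ih]

/-- Bracketing anything with `e₃` on the right gives zero. -/
lemma br_E3 (n : ℕ) (α : ℕ → ℂ) (θ : ℂ) (x : Fin n → ℂ) :
    bracketOf n (F1mul n α θ) x (E n 3) = 0 := by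
  funext k
  rw [bracketOf_apply]
  refine Finset.sum_eq_zero fun i _ => Finset.sum_eq_zero fun j _ => ?_
  rcases eq_or_ne (j.1 + 1) 3 with h | h
  · rw [h]
    have hz : F1mul n α θ (i.1 + 1) 3 = 0 := by
      unfold F1mul
      rw [if_neg (by omega), if_neg (by omega), if_neg (by omega), if_neg (by omega)]
    rw [hz]
    simp
  · rw [E_apply, if_neg h]
    ring

/-- For any pre-derivation `P` of a first-family filiform Leibniz algebra,
writing `P(e₃) = ∑ cₜ eₜ`, one has `c₁ = 0` and `c₂ αₜ = 0` for `4 ≤ t ≤ n-1`. -/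
theorem stmt_10 (n : ℕ) (hn : 5 ≤ n) (α : ℕ → ℂ) (θ : ℂ)
    (hleib : ∀ x y z : Fin n → ℂ,
      bracketOf n (F1mul n α θ) (bracketOf n (F1mul n α θ) x y) z =
        bracketOf n (F1mul n α θ) (bracketOf n (F1mul n α θ) x z) y +
        bracketOf n (F1mul n α θ) x (bracketOf n (F1mul n α θ) y z))
    (P : Module.End ℂ (Fin n → ℂ))
    (hP : IsPreDeriv n (bracketOf n (F1mul n α θ)) P)
    (c : ℕ → ℂ) (hc : P (E n 3) = ∑ t ∈ Icc 1 n, c t • E n t) :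
    c 1 = 0 ∧ ∀ t, 4 ≤ t → t ≤ n - 1 → c 2 * α t = 0 := by
  have h := hP (E n 1) (E n 3) (E n 1)
  rw [br_E3, br_E3, br_zero_left, br_zero_left, map_zero] at h
  have hu : bracketOf n (F1mul n α θ)
      (bracketOf n (F1mul n α θ) (E n 1) (P (E n 3))) (E n 1) = 0 := by
    simpa using h.symm
  rw [hc] at hu
  -- compute the inner bracket
  have hw : bracketOf n (F1mul n α θ) (E n 1) (∑ t ∈ Icc 1 n, c t • E n t)
      = c 1 • E n 3 + c 2 • ((∑ t ∈ Icc 4 (n - 1), α t • E n t) + θ • E n n) := by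
    rw [br_sum_right]
    have step : ∀ t ∈ Icc 1 n, bracketOf n (F1mul n α θ) (E n 1) (c t • E n t)
        = c t • F1mul n α θ 1 t := by
      intro t ht
      rw [Finset.mem_Icc] at ht
      rw [br_smul_right, br_single n _ 1 t (by omega) (by omega) ht.1 ht.2]
    rw [Finset.sum_congr rfl step]
    have hsub : ({1, 2} : Finset ℕ) ⊆ Icc 1 n := by
      intro x hx
      simp only [Finset.mem_insert, Finset.mem_singleton] at hx
      rw [Finset.mem_Icc]
      omega
    rw [← Finset.sum_subset hsub (fun x hx hx2 => by
      simp only [Finset.mem_insert, Finset.mem_singleton, not_or] at hx2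
      rw [Finset.mem_Icc] at hx
      have hz : F1mul n α θ 1 x = 0 := by
        unfold F1mul
        rw [if_neg (by omega), if_neg (by omega), if_neg (by omega), if_neg (by omega)]
      rw [hz, smul_zero])]
    rw [Finset.sum_pair (by norm_num)]
    have h11 : F1mul n α θ 1 1 = E n 3 := by
      unfold F1mul
      rw [if_pos (by omega)]
    have h12 : F1mul n α θ 1 2 = (∑ t ∈ Icc 4 (n - 1), α t • E n t) + θ • E n n := by
      unfold F1mul
      rw [if_neg (by omega), if_neg (by omega), if_pos (by omega)]
    rw [h11, h12]
  rw [hw] at hu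
  -- compute the outer bracket
  have h31 : bracketOf n (F1mul n α θ) (E n 3) (E n 1) = E n 4 := by
    rw [br_single n _ 3 1 (by omega) (by omega) (by omega) (by omega)]
    unfold F1mul
    rw [if_neg (by omega), if_pos (by omega)]
  have hn1 : bracketOf n (F1mul n α θ) (E n n) (E n 1) = 0 := by
    rw [br_single n _ n 1 (by omega) le_rfl (by omega) (by omega)]
    unfold F1mul
    rw [if_neg (by omega), if_neg (by omega), if_neg (by omega), if_neg (by omega)]
  have hsum : ∀ t ∈ Icc 4 (n - 1),
      bracketOf n (F1mul n α θ) (α t • E n t) (E n 1) = α t • E n (t + 1) := by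
    intro t ht
    rw [Finset.mem_Icc] at ht
    rw [br_smul_left, br_single n _ t 1 (by omega) (by omega) (by omega) (by omega)]
    congr 1
    unfold F1mul
    rw [if_neg (by omega), if_pos (by omega)]
  rw [br_add_left, br_smul_left, br_smul_left, br_add_left, br_sum_left, br_smul_left,
    Finset.sum_congr rfl hsum, h31, hn1, smul_zero, add_zero] at hu
  -- hu : c 1 • E n 4 + c 2 • ∑ t ∈ Icc 4 (n-1), α t • E n (t+1) = 0
  constructor
  · have h4 := congrFun hu ⟨3, by omega⟩
    simp only [Pi.add_apply, Pi.smul_apply, smul_eq_mul, Pi.zero_apply, Finset.sum_apply] at h4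
    rw [E_apply, if_pos rfl] at h4
    have hz : ∑ t ∈ Icc 4 (n - 1), α t * E n (t + 1) (⟨3, by omega⟩ : Fin n) = 0 := by
      refine Finset.sum_eq_zero fun t ht => ?_
      rw [Finset.mem_Icc] at ht
      rw [E_apply, if_neg (by simp; omega)]
      ring
    rw [hz] at h4
    simpa using h4
  · intro t ht4 htn
    have h5 := congrFun hu ⟨t, by omega⟩
    simp only [Pi.add_apply, Pi.smul_apply, smul_eq_mul, Pi.zero_apply, Finset.sum_apply] at h5
    rw [E_apply, if_neg (by simp; omega)] at h5
    have hz : ∑ s ∈ Icc 4 (n - 1), α s * E n (s + 1) (⟨t, by omega⟩ : Fin n) = α t := by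
      rw [Finset.sum_eq_single t]
      · rw [E_apply, if_pos (by simp)]
        ring
      · intro s hs hst
        rw [E_apply, if_neg (by simp; omega)]
        ring
      · intro hnot
        exact absurd (Finset.mem_Icc.mpr ⟨ht4, htn⟩) hnot
    rw [hz] at h5
    simpa using h5
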